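/- arXiv:2006.08406 — 5 statements merged into one kernel-verified Lean document; each statement's English description precedes it below -/
import Mathlib

section
/- For every positive integer n, H(n) = 1/(2n) + π·∫₀¹ u·(1 - cos(2πn(1-u)))·cot(π(1-u)) du. -/
open Real intervalIntegral

lemma cot_sum (θ : ℝ) (h : Real.sin θ ≠ 0) (n : ℕ) :
    (1 - Real.cos (2*n*θ)) * Real.cot θ =
    (∑ k ∈ Finset.range n, 2 * Real.sin (2*(k+1:ℕ)*θ)) - Real.sin (2*n*θ) := by
  induction n with
  | zero => simp
  | succ m ih =>
    rw [Finset.sum_range_succ]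
    have key : (1 - Real.cos (2*(m+1:ℕ)*θ)) * Real.cot θ
        = (1 - Real.cos (2*m*θ)) * Real.cot θ + Real.sin (2*m*θ) + Real.sin (2*(m+1:ℕ)*θ) := by
      have hA : (2*((m:ℝ)+1)*θ) = 2*m*θ + 2*θ := by ring
      push_cast
      rw [hA, Real.cos_add, Real.sin_add, Real.cot_eq_cos_div_sin,
        Real.cos_two_mul, Real.sin_two_mul]
      field_simp
      linear_combination (-2 * Real.cos (2*(m:ℝ)*θ) * Real.cos θ) * Real.sin_sq_add_cos_sq θ
    rw [key, ih]
    push_cast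
    ring

lemma int_mul_sin (c : ℝ) (hc : c ≠ 0) :
    ∫ u in (0:ℝ)..1, u * Real.sin (c*u) = (Real.sin c - c * Real.cos c)/c^2 := by
  have hder : ∀ u : ℝ, HasDerivAt (fun x : ℝ => Real.sin (c*x)/c^2 - x * Real.cos (c*x)/c)
      (u * Real.sin (c*u)) u := by
    intro u
    have h0 : HasDerivAt (fun x : ℝ => c * x) c u := by
      simpa using (hasDerivAt_id u).const_mul c
    have h1 := (h0.sin.div_const (c^2)).sub (((hasDerivAt_id u).mul h0.cos).div_const c)
    refine h1.congr_deriv ?_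
    simp only [id]
    field_simp
    ring
  rw [intervalIntegral.integral_eq_sub_of_hasDerivAt (fun u _ => hder u)
    ((continuous_id.mul (Real.continuous_sin.comp (continuous_const.mul continuous_id))).intervalIntegrable _ _)]
  simp
  field_simp

lemma int_term (k : ℕ) (hk : k ≠ 0) :
    ∫ u in (0:ℝ)..1, u * Real.sin (2*π*k*(1-u)) = 1/(2*π*k) := by
  have hrw : ∀ u : ℝ, Real.sin (2*π*(k:ℝ)*(1-u)) = -Real.sin (2*π*k*u) := by
    intro u
    have h1 : 2*π*(k:ℝ)*(1-u) = (k:ℝ)*(2*π) - 2*π*k*u := by ring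
    rw [h1, Real.sin_nat_mul_two_pi_sub]
  have hc : (2*π*(k:ℝ)) ≠ 0 := by
    have : (k:ℝ) ≠ 0 := Nat.cast_ne_zero.mpr hk
    positivity
  simp only [hrw, mul_neg]
  rw [intervalIntegral.integral_neg, int_mul_sin _ hc]
  have h2 : Real.sin (2*π*(k:ℝ)) = 0 := by
    have : 2*π*(k:ℝ) = 0 + (k:ℝ)*(2*π) := by ring
    rw [this, Real.sin_add_nat_mul_two_pi, Real.sin_zero]
  have h3 : Real.cos (2*π*(k:ℝ)) = 1 := by
    have : 2*π*(k:ℝ) = (k:ℝ)*(2*π) := by ring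
    rw [this, Real.cos_nat_mul_two_pi]
  rw [h2, h3]
  field_simp
  ring

lemma int_cont (k : ℕ) : IntervalIntegrable (fun u : ℝ => u * Real.sin (2*π*k*(1-u)))
    MeasureTheory.volume 0 1 := by
  apply Continuous.intervalIntegrable
  continuity

/-- The harmonic number `H(n) = ∑_{j=1}^n 1/j`. -/
noncomputable def harmonicR (n : ℕ) : ℝ := ∑ j ∈ Finset.range n, (1 : ℝ) / (j + 1)

set_option maxHeartbeats 1000000 in
theorem harmonic_eq_integral (n : ℕ) (hn : 0 < n) :
    harmonicR n = 1 / (2 * n) +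
      π * ∫ u in (0:ℝ)..1,
        u * (1 - Real.cos (2 * π * n * (1 - u))) * Real.cot (π * (1 - u)) := by
  have hn' : (n:ℝ) ≠ 0 := Nat.cast_ne_zero.mpr hn.ne'
  have hcong : (∫ u in (0:ℝ)..1,
        u * (1 - Real.cos (2 * π * n * (1 - u))) * Real.cot (π * (1 - u))) =
      ∫ u in (0:ℝ)..1,
        ((∑ k ∈ Finset.range n, 2 * (u * Real.sin (2*π*(k+1:ℕ)*(1-u))))
          - u * Real.sin (2*π*n*(1-u))) := by
    apply intervalIntegral.integral_congr
    intro u hu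
    rw [Set.uIcc_of_le (by norm_num : (0:ℝ) ≤ 1)] at hu
    obtain ⟨h0, h1⟩ := hu
    rcases eq_or_lt_of_le h1 with h1 | h1
    · simp [h1]
    · rcases eq_or_lt_of_le h0 with h0 | h0
      · simp [← h0]
      have hs : Real.sin (π*(1-u)) ≠ 0 := by
        refine ne_of_gt (Real.sin_pos_of_pos_of_lt_pi ?_ ?_)
        · have : (0:ℝ) < 1 - u := by linarith
          positivity
        · nlinarith [Real.pi_pos]
      have harg : ∀ m : ℕ, 2*(m:ℝ)*(π*(1-u)) = 2*π*m*(1-u) := fun m => by ring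
      calc u * (1 - Real.cos (2*π*n*(1-u))) * Real.cot (π*(1-u))
          = (1 - Real.cos (2*(n:ℝ)*(π*(1-u)))) * Real.cot (π*(1-u)) * u := by
            rw [harg]; ring
        _ = ((∑ k ∈ Finset.range n, 2 * Real.sin (2*(k+1:ℕ)*(π*(1-u))))
              - Real.sin (2*(n:ℝ)*(π*(1-u)))) * u := by rw [cot_sum _ hs n]
        _ = ((∑ k ∈ Finset.range n, 2 * (u * Real.sin (2*π*(k+1:ℕ)*(1-u))))
              - u * Real.sin (2*π*n*(1-u))) := by
            simp only [harg]
            rw [sub_mul, Finset.sum_mul]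
            congr 1
            · exact Finset.sum_congr rfl fun k _ => by ring
            · ring
  rw [hcong]
  have hi1 : IntervalIntegrable
      (fun u : ℝ => ∑ k ∈ Finset.range n, 2 * (u * Real.sin (2*π*(k+1:ℕ)*(1-u))))
      MeasureTheory.volume 0 1 := by
    apply Continuous.intervalIntegrable
    apply continuous_finset_sum
    intro k _
    continuity
  rw [intervalIntegral.integral_sub hi1 (int_cont n),
    intervalIntegral.integral_finset_sum (fun k _ => (int_cont (k+1)).const_mul 2)]
  have hterm : ∀ k ∈ Finset.range n,
      (∫ u in (0:ℝ)..1, 2 * (u * Real.sin (2*π*(k+1:ℕ)*(1-u))))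
        = 2 * (1/(2*π*(k+1:ℕ))) := by
    intro k _
    rw [intervalIntegral.integral_const_mul, int_term (k+1) (Nat.succ_ne_zero k)]
  rw [Finset.sum_congr rfl hterm, int_term n hn.ne']
  unfold harmonicR
  rw [mul_sub, Finset.mul_sum]
  have hsum : ∀ k ∈ Finset.range n,
      π * (2 * (1/(2*π*(k+1:ℕ)))) = (1:ℝ)/(k+1) := by
    intro k _
    have : ((k:ℝ)+1) ≠ 0 := by positivity
    push_cast
    field_simp
  rw [Finset.sum_congr rfl hsum]
  have : π * (1/(2*π*(n:ℝ))) = 1/(2*(n:ℝ)) := by field_simp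
  rw [this]
  ring
end

section
/- Theorem 1 (general real m with |m| ≥ 1, k ≥ 0 real): lim_{n→∞} ∫₀¹ (1-u)^k · sin(2πnu/m) · cot(πu/m) du = |m|/2, where n ranges over positive integers. -/
/-!
Write `D n v = cos (2πnv) + 2 ∑_{j<n} cos (2πjv) - 1` (the average of the Dirichlet kernels of
orders `n - 1` and `n`). Then `sin (2πnv) cot (πv) = D n v`, and integrating the cosines against
the tent `1 - v` on `[0, 1]` gives `∫₀¹ (1 - v) D n v dv = 1/2`; rescaling,
`∫₀^m (1 - u/m) sin (2πnu/m) cot (πu/m) du = m/2`. The integral of the theorem differs from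
this by `∫₀¹ g₁(u) sin (2πnu/m) du - ∫₁^m g₂(u) sin (2πnu/m) du` with
`g₁ = ((1-u)^k - (1-u/m)) cot (πu/m)` and `g₂ = (1-u/m) cot (πu/m)`. Both are integrable: the
numerators vanish where `cot` has its poles, except that for `m = 1` the numerator of `g₁` only
decays like `(1-u)^k` at `u = 1`, which is integrable against `cot (πu) ~ -1/(π(1-u))` exactly
when `k > 0`. The Riemann–Lebesgue lemma finishes the proof; negative `m` reduces to `|m|` since
the integrand is even in `m`.
-/

open Real Filter intervalIntegral MeasureTheory Topology

theorem integral_one_sub_mul_cos_two_pi_mul (j : ℕ) :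
    ∫ v in (0 : ℝ)..1, (1 - v) * cos (2 * π * j * v) = if j = 0 then 1 / 2 else 0 := by
  rcases eq_or_ne j 0 with rfl | hj
  · norm_num [intervalIntegral.integral_sub intervalIntegrable_const intervalIntegrable_id]
  set c := 2 * π * j
  have hc : c ≠ 0 := by positivity
  have hderiv : ∀ v ∈ Set.uIcc (0 : ℝ) 1,
      HasDerivAt (fun v => (1 - v) * sin (c * v) / c - cos (c * v) / c ^ 2)
        ((1 - v) * cos (c * v)) v := by
    intro v _
    have hcv : HasDerivAt (fun v => c * v) c v := by simpa using (hasDerivAt_id v).const_mul c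
    have := ((((hasDerivAt_id v).const_sub 1).mul ((hasDerivAt_sin _).comp v hcv)).div_const c).sub
      (((hasDerivAt_cos _).comp v hcv).div_const (c ^ 2))
    refine this.congr_deriv ?_
    simp only [Function.comp_apply, id]
    field_simp
    ring
  have hint : IntervalIntegrable (fun v => (1 - v) * cos (c * v)) volume 0 1 :=
    (by fun_prop : Continuous _).intervalIntegrable _ _
  rw [integral_eq_sub_of_hasDerivAt hderiv hint, if_neg hj]
  have : cos c = 1 := by simpa [c, mul_comm] using cos_nat_mul_two_pi j
  simp [this]

noncomputable def modDirichletKernel (n : ℕ) (v : ℝ) : ℝ :=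
  cos (2 * π * n * v) + 2 * ∑ j ∈ Finset.range n, cos (2 * π * j * v) - 1

namespace modDirichletKernel

theorem sin_mul_cos_eq (n : ℕ) (v : ℝ) :
    sin (2 * π * n * v) * cos (π * v) = sin (π * v) * modDirichletKernel n v := by
  induction n with
  | zero => simp [modDirichletKernel]
  | succ n ih =>
    have h2 : 2 * π * ((n : ℝ) + 1) * v = 2 * π * n * v + 2 * (π * v) := by ring
    unfold modDirichletKernel at ih ⊢
    push_cast
    rw [Finset.sum_range_succ, h2, sin_add, cos_add, sin_two_mul, cos_two_mul']
    linear_combination ih + (sin (2 * π * n * v) * cos (π * v)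
      + cos (2 * π * n * v) * sin (π * v)) * sin_sq_add_cos_sq (π * v)

@[fun_prop]
theorem continuous (n : ℕ) : Continuous (modDirichletKernel n) := by
  unfold modDirichletKernel
  fun_prop

theorem sin_mul_cot_eq {v : ℝ} (hv : sin (π * v) ≠ 0) (n : ℕ) :
    sin (2 * π * n * v) * cot (π * v) = modDirichletKernel n v := by
  rw [cot_eq_cos_div_sin, mul_div_assoc', div_eq_iff hv, sin_mul_cos_eq, mul_comm]

theorem sin_mul_cot_ae_eq {m : ℝ} (hm : m ≠ 0) (n : ℕ) :
    (fun u => sin (2 * π * n * u / m) * cot (π * u / m)) =ᵐ[volume]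
      fun u => modDirichletKernel n (u / m) := by
  have hnull : ∀ᵐ u : ℝ, u ∉ Set.range fun z : ℤ => z * m :=
    (Set.countable_range _).ae_notMem volume
  filter_upwards [hnull] with u hu
  have hsin : sin (π * (u / m)) ≠ 0 := by
    rw [Ne, sin_eq_zero_iff]
    rintro ⟨z, hz⟩
    exact hu ⟨z, by field_simp at hz; linarith⟩
  rw [← sin_mul_cot_eq hsin]
  ring_nf

theorem integral_one_sub_mul {n : ℕ} (hn : n ≠ 0) :
    ∫ v in (0 : ℝ)..1, (1 - v) * modDirichletKernel n v = 1 / 2 := by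
  have hI : ∀ j : ℕ, IntervalIntegrable (fun v => (1 - v) * cos (2 * π * j * v)) volume 0 1 :=
    fun j => (by fun_prop : Continuous _).intervalIntegrable _ _
  have hexpand : ∀ v, (1 - v) * modDirichletKernel n v = (1 - v) * cos (2 * π * n * v)
      + ∑ j ∈ Finset.range n, 2 * ((1 - v) * cos (2 * π * j * v))
      - (1 - v) * cos (2 * π * (0 : ℕ) * v) := by
    intro v
    simp only [modDirichletKernel, mul_sub, mul_add, Finset.mul_sum, mul_left_comm (1 - v) 2,
      Nat.cast_zero, mul_zero, zero_mul, cos_zero, mul_one]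
  simp_rw [hexpand]
  have hsum : IntervalIntegrable
      (fun v => ∑ j ∈ Finset.range n, 2 * ((1 - v) * cos (2 * π * j * v))) volume 0 1 :=
    (by fun_prop : Continuous _).intervalIntegrable _ _
  rw [integral_sub ((hI n).add hsum) (hI 0), integral_add (hI n) hsum,
    integral_finsetSum fun j _ => (hI j).const_mul 2]
  simp only [intervalIntegral.integral_const_mul, integral_one_sub_mul_cos_two_pi_mul]
  norm_num [hn, Nat.pos_of_ne_zero hn]

end modDirichletKernel

theorem intervalIntegrable_sin_mul_cot {m : ℝ} (hm : m ≠ 0) (n : ℕ) (a b : ℝ) :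
    IntervalIntegrable (fun u => sin (2 * π * n * u / m) * cot (π * u / m)) volume a b :=
  ((modDirichletKernel.continuous n).comp (continuous_id.div_const m)).intervalIntegrable a b
    |>.congr_ae (ae_restrict_of_ae (modDirichletKernel.sin_mul_cot_ae_eq hm n).symm)

theorem integral_one_sub_div_mul_sin_mul_cot {m : ℝ} (hm : m ≠ 0) {n : ℕ} (hn : n ≠ 0) :
    ∫ u in (0 : ℝ)..m, (1 - u / m) * (sin (2 * π * n * u / m) * cot (π * u / m)) = m / 2 := by
  rw [integral_congr_ae ((modDirichletKernel.sin_mul_cot_ae_eq hm n).mono fun u hu _ =>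
    congrArg ((1 - u / m) * ·) hu)]
  have := integral_comp_div (fun v => (1 - v) * modDirichletKernel n v) hm (a := 0) (b := m)
  rw [zero_div, div_self hm, modDirichletKernel.integral_one_sub_mul hn, smul_eq_mul] at this
  exact this.trans (mul_one_div m 2)

theorem integral_mul_sin_eq_neg_im_fourier {f : ℝ → ℝ} (hf : Integrable f) (t : ℝ) :
    ∫ x, f x * sin (t * x) =
      -(∫ x : ℝ, Real.fourierChar (-(x * (t * (2 * π)⁻¹))) • (f x : ℂ)).im := by
  have hint :
      Integrable fun x : ℝ => Real.fourierChar (-(x * (t * (2 * π)⁻¹))) • (f x : ℂ) := by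
    simpa only [Real.inner_apply, RCLike.ofReal_eq_complex_ofReal] using
      (Real.fourierIntegral_convergent_iff _).2 (hf.ofReal (𝕜 := ℂ))
  have him := integral_im (𝕜 := ℂ) hint
  simp only [RCLike.im_to_complex] at him
  rw [← him, ← MeasureTheory.integral_neg]
  congr 1 with x
  have harg : 2 * π * -(x * (t * (2 * π)⁻¹)) = -(t * x) := by field_simp
  rw [Circle.smul_def, Real.fourierChar_apply, harg, smul_eq_mul, Complex.im_mul_ofReal,
    Complex.exp_ofReal_mul_I_im, sin_neg, neg_mul, neg_neg, mul_comm]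

theorem tendsto_integral_mul_sin_cocompact {f : ℝ → ℝ} (hf : Integrable f) :
    Tendsto (fun t => ∫ x, f x * sin (t * x)) (cocompact ℝ) (𝓝 0) := by
  have hRL := (Real.tendsto_integral_exp_smul_cocompact fun x => (f x : ℂ)).comp
    (tendsto_cocompact_mul_right₀ (inv_ne_zero two_pi_pos.ne'))
  simpa [integral_mul_sin_eq_neg_im_fourier hf] using
    ((Complex.continuous_im.tendsto 0).comp hRL).neg

theorem tendsto_setIntegral_mul_sin_cocompact {f : ℝ → ℝ} {s : Set ℝ} (hs : MeasurableSet s)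
    (hf : IntegrableOn f s) :
    Tendsto (fun t => ∫ x in s, f x * sin (t * x)) (cocompact ℝ) (𝓝 0) := by
  refine (tendsto_integral_mul_sin_cocompact ((integrable_indicator_iff hs).2 hf)).congr
    fun t => ?_
  rw [← MeasureTheory.integral_indicator hs]
  simp_rw [Set.indicator_mul_left]

theorem tendsto_intervalIntegral_mul_sin_cocompact {f : ℝ → ℝ} {a b : ℝ}
    (hf : IntervalIntegrable f volume a b) :
    Tendsto (fun t => ∫ x in a..b, f x * sin (t * x)) (cocompact ℝ) (𝓝 0) := by
  simpa [intervalIntegral] using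
    (tendsto_setIntegral_mul_sin_cocompact measurableSet_Ioc hf.1).sub
      (tendsto_setIntegral_mul_sin_cocompact measurableSet_Ioc hf.2)

theorem two_mul_mul_pi_sub_div_sq_le_sin {x : ℝ} (hx₀ : 0 ≤ x) (hxπ : x ≤ π) :
    2 * x * (π - x) / π ^ 2 ≤ sin x := by
  wlog hx : x ≤ π / 2 generalizing x
  · simpa [sin_pi_sub, mul_right_comm] using this (x := π - x) (by linarith) (by linarith)
      (by linarith)
  calc 2 * x * (π - x) / π ^ 2 ≤ 2 * x * π / π ^ 2 := by gcongr; linarith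
    _ = 2 / π * x := by field_simp
    _ ≤ sin x := mul_le_sin hx₀ hx

theorem abs_cot_pi_mul_div_le {m u : ℝ} (hu : 0 < u) (hum : u < m) :
    |cot (π * u / m)| ≤ m ^ 2 / (2 * u * (m - u)) := by
  have hm : 0 < m := hu.trans hum
  have hx : 0 < π * u / m := by positivity
  have hxπ : π * u / m < π := by rw [div_lt_iff₀ hm]; nlinarith [pi_pos]
  have hsin_pos := sin_pos_of_pos_of_lt_pi hx hxπ
  have hlow : 2 * u * (m - u) / m ^ 2 ≤ sin (π * u / m) := by
    convert two_mul_mul_pi_sub_div_sq_le_sin hx.le hxπ.le using 1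
    field_simp
  calc |cot (π * u / m)| = |cos (π * u / m)| / sin (π * u / m) := by
        rw [cot_eq_cos_div_sin, abs_div, abs_of_pos hsin_pos]
    _ ≤ 1 / sin (π * u / m) := by gcongr; exact abs_cos_le_one _
    _ ≤ 1 / (2 * u * (m - u) / m ^ 2) := by gcongr
    _ = m ^ 2 / (2 * u * (m - u)) := one_div_div _ _

theorem one_sub_mul_le_rpow_one_sub {k u : ℝ} (hk : 0 ≤ k) (hu₀ : 0 ≤ u) (hu₁ : u ≤ 1) :
    1 - (k + 1) * u ≤ (1 - u) ^ k := by
  rcases le_total 1 k with hk1 | hk1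
  · have := one_add_mul_self_le_rpow_one_add (s := -u) (by linarith) hk1
    rw [← sub_eq_add_neg] at this
    nlinarith
  · have := self_le_rpow_of_le_one (sub_nonneg.2 hu₁) (by linarith) hk1
    nlinarith

theorem integrableOn_rpow_one_sub_div_sub {m k : ℝ} (hm : 1 ≤ m) (hk : 0 ≤ k)
    (h : ¬ (k = 0 ∧ m = 1)) :
    IntegrableOn (fun u => (1 - u) ^ k / (m - u)) (Set.Ioo 0 1) := by
  rcases hm.lt_or_eq with hm | rfl
  · refine (ContinuousOn.integrableOn_Icc ?_).mono_set Set.Ioo_subset_Icc_self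
    refine ContinuousOn.div ?_ (by fun_prop) fun u hu => by linarith [hu.2]
    exact (continuous_const.sub continuous_id).rpow_const (fun _ => Or.inr hk) |>.continuousOn
  · have hk₁ : -1 < k - 1 := by
      have := hk.lt_of_ne fun h0 => h ⟨h0.symm, rfl⟩
      linarith
    have hint := ((intervalIntegral.intervalIntegrable_rpow' hk₁ (a := 0) (b := 1)).comp_sub_left
      1).symm
    rw [sub_self, sub_zero, intervalIntegrable_iff_integrableOn_Ioo_of_le zero_le_one] at hint
    refine hint.congr_fun (fun u hu => ?_) measurableSet_Ioo
    exact rpow_sub_one (by linarith [hu.2]) k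

theorem abs_rpow_sub_mul_cot_le {m k u : ℝ} (hm : 1 ≤ m) (hk : 0 ≤ k)
    (hu : u ∈ Set.Ioo 0 1) :
    |((1 - u) ^ k - (1 - u / m)) * cot (π * u / m)| ≤
      (k + 2) * m ^ 2 + m ^ 2 * ((1 - u) ^ k / (m - u)) := by
  obtain ⟨hu₀, hu₁⟩ := hu
  have hmu : 0 < m - u := by linarith
  rw [abs_mul]
  set P := (1 - u) ^ k
  set c := |cot (π * u / m)|
  have hP₀ : 0 ≤ P := rpow_nonneg (by linarith) k
  have hP₁ : P ≤ 1 := rpow_le_one (by linarith) (by linarith) hk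
  have hc₀ : 0 ≤ c := abs_nonneg _
  have hc : c * (2 * u * (m - u)) ≤ m ^ 2 := by
    rw [← le_div_iff₀ (by positivity)]
    exact abs_cot_pi_mul_div_le hu₀ (by linarith)
  have hum₀ : 0 ≤ u / m := by positivity
  have hum : u / m ≤ u := div_le_self hu₀.le (by linarith)
  have hrest : 0 ≤ m ^ 2 * (P / (m - u)) := by positivity
  rcases le_or_gt u (1 / 2) with hsmall | hlarge
  · have hN : |P - (1 - u / m)| ≤ (k + 1) * u := by
      have := one_sub_mul_le_rpow_one_sub hk hu₀.le hu₁.le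
      rw [abs_le]
      constructor <;> nlinarith
    have huc : u * c ≤ m ^ 2 := by nlinarith
    nlinarith [mul_le_mul_of_nonneg_right hN hc₀]
  · have hN : |P - (1 - u / m)| ≤ P + (1 - u / m) := by
      rw [abs_le]
      constructor <;> nlinarith
    have hcm : c * (m - u) ≤ m ^ 2 := by nlinarith
    have hPc : P * c ≤ m ^ 2 * (P / (m - u)) := by
      rw [mul_div_assoc', le_div_iff₀ hmu]
      nlinarith
    have hweight : 1 - u / m ≤ m - u := by
      rw [one_sub_div (by positivity), div_le_iff₀ (by positivity)]
      nlinarith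
    nlinarith [mul_le_mul_of_nonneg_right hN hc₀, mul_le_mul_of_nonneg_right hweight hc₀]

@[fun_prop]
theorem Real.measurable_cot : Measurable cot := by
  rw [show cot = fun x => cos x / sin x from funext cot_eq_cos_div_sin]
  fun_prop

theorem intervalIntegrable_rpow_sub_mul_cot {m k : ℝ} (hm : 1 ≤ m) (hk : 0 ≤ k)
    (h : ¬ (k = 0 ∧ m = 1)) :
    IntervalIntegrable (fun u => ((1 - u) ^ k - (1 - u / m)) * cot (π * u / m)) volume 0 1 := by
  rw [intervalIntegrable_iff_integrableOn_Ioo_of_le zero_le_one]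
  refine Integrable.mono' ((integrableOn_const (C := (k + 2) * m ^ 2) measure_Ioo_lt_top.ne).add
    ((integrableOn_rpow_one_sub_div_sub hm hk h).const_mul (m ^ 2))) (by fun_prop)
    ((ae_restrict_iff' measurableSet_Ioo).2 (ae_of_all _ fun u hu => ?_))
  exact (Real.norm_eq_abs _).trans_le (abs_rpow_sub_mul_cot_le hm hk hu)

theorem intervalIntegrable_one_sub_div_mul_cot {a m : ℝ} (ha : 0 < a) (ham : a ≤ m) :
    IntervalIntegrable (fun u => (1 - u / m) * cot (π * u / m)) volume a m := by
  rw [intervalIntegrable_iff_integrableOn_Ioo_of_le ham]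
  refine Integrable.mono' (integrableOn_const (C := m / (2 * a)) measure_Ioo_lt_top.ne)
    (by fun_prop) ((ae_restrict_iff' measurableSet_Ioo).2 (ae_of_all _ fun u hu => ?_))
  obtain ⟨hau, hum⟩ := hu
  have hu : 0 < u := ha.trans hau
  have hm : 0 < m := hu.trans hum
  have hc := abs_cot_pi_mul_div_le hu hum
  rw [norm_mul, Real.norm_eq_abs, abs_of_pos (by rw [sub_pos, div_lt_one hm]; exact hum)]
  calc (1 - u / m) * |cot (π * u / m)| ≤ (m - u) / m * (m ^ 2 / (2 * u * (m - u))) := by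
        rw [one_sub_div hm.ne']; gcongr
    _ = m / (2 * u) := by field_simp
    _ ≤ m / (2 * a) := by gcongr

theorem integral_mul_sin_mul_cot_eq {w : ℝ → ℝ} {m : ℝ} (hm : m ≠ 0)
    (hw : IntervalIntegrable (fun u => (w u - (1 - u / m)) * cot (π * u / m)) volume 0 1)
    {n : ℕ} (hn : n ≠ 0) :
    ∫ u in (0 : ℝ)..1, w u * sin (2 * π * n * u / m) * cot (π * u / m) = m / 2
      + (∫ u in (0 : ℝ)..1, (w u - (1 - u / m)) * cot (π * u / m) * sin (2 * π * n / m * u))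
      - ∫ u in (1 : ℝ)..m, (1 - u / m) * cot (π * u / m) * sin (2 * π * n / m * u) := by
  have hfreq : ∀ u, 2 * π * n / m * u = 2 * π * n * u / m := fun u => by ring
  have hS : ∀ a b, IntervalIntegrable
      (fun u => (1 - u / m) * (sin (2 * π * n * u / m) * cot (π * u / m))) volume a b :=
    fun a b => (intervalIntegrable_sin_mul_cot hm n a b).continuousOn_mul (by fun_prop)
  have hsplit : ∫ u in (0 : ℝ)..1, (1 - u / m) * (sin (2 * π * n * u / m) * cot (π * u / m)) =
      m / 2 - ∫ u in (1 : ℝ)..m, (1 - u / m) * cot (π * u / m) * sin (2 * π * n / m * u) := by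
    rw [← integral_one_sub_div_mul_sin_mul_cot hm hn,
      ← integral_add_adjacent_intervals (hS 0 1) (hS 1 m), add_sub_assoc, left_eq_add,
      sub_eq_zero]
    exact integral_congr fun u _ => by simp only [hfreq]; ring
  have hweight : ∫ u in (0 : ℝ)..1, w u * sin (2 * π * n * u / m) * cot (π * u / m) =
      (∫ u in (0 : ℝ)..1, (w u - (1 - u / m)) * cot (π * u / m) * sin (2 * π * n / m * u))
      + ∫ u in (0 : ℝ)..1, (1 - u / m) * (sin (2 * π * n * u / m) * cot (π * u / m)) := by
    rw [← integral_add (hw.mul_continuousOn (by fun_prop)) (hS 0 1)]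
    exact integral_congr fun u _ => by simp only [hfreq]; ring
  rw [hweight, hsplit]
  ring

theorem tendsto_integral_rpow_sin_cot_of_one_le {m k : ℝ} (hm : 1 ≤ m) (hk : 0 ≤ k)
    (h : ¬ (k = 0 ∧ m = 1)) :
    Tendsto (fun n : ℕ => ∫ u in (0 : ℝ)..1,
      (1 - u) ^ k * sin (2 * π * n * u / m) * cot (π * u / m)) atTop (𝓝 (m / 2)) := by
  have hm₀ : 0 < m := by linarith
  have hfreq : Tendsto (fun n : ℕ => 2 * π * n / m) atTop (cocompact ℝ) :=
    ((tendsto_natCast_atTop_atTop.const_mul_atTop two_pi_pos).atTop_div_const hm₀).mono_right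
      atTop_le_cocompact
  have hg₁ := intervalIntegrable_rpow_sub_mul_cot hm hk h
  have hA := (tendsto_intervalIntegral_mul_sin_cocompact hg₁).comp hfreq
  have hB := (tendsto_intervalIntegral_mul_sin_cocompact
    (intervalIntegrable_one_sub_div_mul_cot one_pos hm)).comp hfreq
  have hlim := (hA.const_add (m / 2)).sub hB
  rw [add_zero, sub_zero] at hlim
  refine hlim.congr' ?_
  filter_upwards [eventually_ne_atTop 0] with n hn
  exact (integral_mul_sin_mul_cot_eq (w := fun u => (1 - u) ^ k) hm₀.ne' hg₁ hn).symm

theorem sin_div_abs_mul_cot_div_abs (a b m : ℝ) :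
    sin (a / |m|) * cot (b / |m|) = sin (a / m) * cot (b / m) := by
  rcases abs_choice m with hm | hm <;> rw [hm]
  simp only [div_neg, sin_neg, cot_eq_cos_div_sin, cos_neg, neg_mul_neg]

theorem tendsto_integral_rpow_sin_cot (m k : ℝ) (hm : 1 ≤ |m|) (hk : 0 ≤ k)
    (h : ¬ (k = 0 ∧ |m| = 1)) :
    Filter.Tendsto
      (fun n : ℕ => ∫ u in (0:ℝ)..1,
        (1 - u) ^ k * Real.sin (2 * π * n * u / m) * Real.cot (π * u / m))
      Filter.atTop (nhds (|m| / 2)) := by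
  refine (tendsto_integral_rpow_sin_cot_of_one_le hm hk h).congr fun n =>
    integral_congr fun u _ => ?_
  simp only [mul_assoc, sin_div_abs_mul_cot_div_abs]
end

section
/- For every integer k ≥ 1 and every real m with |m| ≥ 1, the Fourier-type series ∑_{j=1}^{∞} cos(2πj/m)/j^{2k} equals ∑_{j=0}^{k} ((-1)^{k-j}/(2k-2j)!)·(2π/m)^{2k-2j}·ζ(2j) + ((-1)^k·|m|/(4(2k-1)!))·(2π/m)^{2k}, where ζ(0) = -1/2. -/
/-!
For `x ∈ [0, 1]` the series `∑ cos (2π n x) / n ^ (2k)` is the Fourier expansion of the Bernoulli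
polynomial `B_{2k}` (Mathlib's `hasSum_one_div_nat_pow_mul_cos`); here `x = 1 / |m|`. Expanding
`B_{2k}(x) = ∑ B_i C(2k, i) x ^ (2k - i)`, the odd Bernoulli numbers vanish except `B_1 = -1/2`,
which gives the term linear in `|m|`, and Euler's formula turns each even `B_{2j}` into `ζ(2j)`.
-/

open Real Complex Finset Nat

theorem sum_range_two_mul_add_one_eq_even_add_odd {M : Type*} [AddCommMonoid M] (f : ℕ → M)
    (n : ℕ) :
    ∑ i ∈ range (2 * n + 1), f i =
      ∑ j ∈ range (n + 1), f (2 * j) + ∑ j ∈ range n, f (2 * j + 1) := by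
  induction n with
  | zero => simp
  | succ n ih =>
    rw [show 2 * (n + 1) + 1 = 2 * n + 1 + 1 + 1 by ring, sum_range_succ, sum_range_succ, ih,
      sum_range_succ (fun j => f (2 * j)) (n + 1), sum_range_succ (fun j => f (2 * j + 1)) n,
      show 2 * n + 1 + 1 = 2 * (n + 1) by ring]
    abel

theorem aeval_bernoulli_two_mul {K : Type*} [Field K] [CharZero K] (k : ℕ) (x : K) :
    Polynomial.aeval x (Polynomial.bernoulli (2 * k)) =
      ∑ j ∈ range (k + 1), (bernoulli (2 * j) : K) * (2 * k).choose (2 * j) * x ^ (2 * k - 2 * j)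
        - k * x ^ (2 * k - 1) := by
  have hodd : ∑ j ∈ range k, (bernoulli (2 * j + 1) : K) * (2 * k).choose (2 * j + 1)
      * x ^ (2 * k - (2 * j + 1)) = -k * x ^ (2 * k - 1) := by
    rw [sum_eq_single 0]
    · simp only [mul_zero, zero_add, bernoulli_one, choose_one_right]
      push_cast
      ring
    · intro j _ hj
      rw [bernoulli_eq_zero_of_odd (odd_two_mul_add_one j) (by omega)]
      simp
    · intro h
      simp [show k = 0 by simpa using h]
  rw [Polynomial.bernoulli, map_sum, sum_range_two_mul_add_one_eq_even_add_odd]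
  simp only [Polynomial.aeval_monomial, map_mul, map_natCast, eq_ratCast]
  rw [hodd, sub_eq_add_neg, neg_mul]

/-- Euler's formula; at `j = 0` it reads `1 = -2 ζ(0)`. -/
theorem bernoulli_two_mul_eq_riemannZeta (j : ℕ) :
    (bernoulli (2 * j) : ℂ) =
      (-1) ^ (j + 1) * 2 * (2 * j)! / (2 * π) ^ (2 * j) * riemannZeta (2 * j) := by
  have hpow : (2 : ℂ) ^ (2 * j - 1 : ℤ) = 2 ^ (2 * j) / 2 := by
    rw [zpow_sub₀ two_ne_zero, zpow_one, ← zpow_natCast]; push_cast; rfl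
  have : (π : ℂ) ≠ 0 := by exact_mod_cast pi_ne_zero
  have : ((2 * j)! : ℂ) ≠ 0 := Nat.cast_ne_zero.2 (factorial_ne_zero _)
  rw [riemannZeta_two_mul_nat', hpow, mul_pow]
  field_simp
  simp [← pow_mul]

theorem bernoulli_even_term_eq_riemannZeta_term {k j : ℕ} (hj : j ≤ k) (x : ℂ) :
    (-1) ^ (k + 1) * (2 * π) ^ (2 * k) / 2 / (2 * k)! *
        ((bernoulli (2 * j) : ℂ) * (2 * k).choose (2 * j) * x ^ (2 * k - 2 * j)) =
      (-1) ^ (k - j) / (2 * k - 2 * j)! * (2 * π * x) ^ (2 * k - 2 * j) * riemannZeta (2 * j) := by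
  obtain ⟨d, rfl⟩ := Nat.exists_eq_add_of_le hj
  rw [bernoulli_two_mul_eq_riemannZeta, Nat.cast_choose ℂ (by omega),
    show 2 * (j + d) - 2 * j = 2 * d by omega, Nat.add_sub_cancel_left]
  have : (π : ℂ) ≠ 0 := by exact_mod_cast pi_ne_zero
  have : ((2 * j)! : ℂ) ≠ 0 := Nat.cast_ne_zero.2 (factorial_ne_zero _)
  have : ((2 * d)! : ℂ) ≠ 0 := Nat.cast_ne_zero.2 (factorial_ne_zero _)
  have : ((2 * (j + d))! : ℂ) ≠ 0 := Nat.cast_ne_zero.2 (factorial_ne_zero _)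
  field_simp
  ring_nf
  rw [mul_comm j 2, (even_two_mul j).neg_one_pow]
  ring

/-- At `x = 0` both sides vanish, the right one because `0⁻¹ = 0`. -/
theorem bernoulli_one_term_eq {k : ℕ} (hk : 1 ≤ k) (x : ℂ) :
    -((-1) ^ (k + 1) * (2 * π) ^ (2 * k) / 2 / (2 * k)! * (k * x ^ (2 * k - 1))) =
      (-1) ^ k * x⁻¹ / (4 * (2 * k - 1)!) * (2 * π * x) ^ (2 * k) := by
  rcases eq_or_ne x 0 with rfl | hx
  · simp [zero_pow (show 2 * k - 1 ≠ 0 by omega), zero_pow (show 2 * k ≠ 0 by omega)]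
  have hfac : ((2 * k)! : ℂ) = 2 * k * (2 * k - 1)! := by
    rw [← Nat.mul_factorial_pred (by omega : 2 * k ≠ 0)]; push_cast; ring
  have hpow : x ^ (2 * k) = x * x ^ (2 * k - 1) := (mul_pow_sub_one (by omega) x).symm
  have : ((2 * k - 1)! : ℂ) ≠ 0 := Nat.cast_ne_zero.2 (factorial_ne_zero _)
  have : (k : ℂ) ≠ 0 := Nat.cast_ne_zero.2 (by omega)
  rw [hfac, mul_pow (2 * π : ℂ) x, hpow]
  field_simp
  ring

theorem aeval_bernoulli_two_mul_eq_sum_riemannZeta {k : ℕ} (hk : 1 ≤ k) (x : ℂ) :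
    (-1) ^ (k + 1) * (2 * π) ^ (2 * k) / 2 / (2 * k)! *
        Polynomial.aeval x (Polynomial.bernoulli (2 * k)) =
      ∑ j ∈ range (k + 1),
          (-1) ^ (k - j) / (2 * k - 2 * j)! * (2 * π * x) ^ (2 * k - 2 * j) * riemannZeta (2 * j)
        + (-1) ^ k * x⁻¹ / (4 * (2 * k - 1)!) * (2 * π * x) ^ (2 * k) := by
  rw [aeval_bernoulli_two_mul, mul_sub, mul_sum, sub_eq_add_neg, bernoulli_one_term_eq hk]
  congr 1
  exact sum_congr rfl fun j hj =>
    bernoulli_even_term_eq_riemannZeta_term (by simpa [Nat.lt_succ_iff] using hj) x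

theorem hasSum_cos_succ_div_pow {k : ℕ} (hk : k ≠ 0) {x : ℝ} (hx : x ∈ Set.Icc (0 : ℝ) 1) :
    HasSum (fun n : ℕ => Real.cos (2 * π * (n + 1) * x) / ((n : ℝ) + 1) ^ (2 * k))
      ((-1) ^ (k + 1) * (2 * π) ^ (2 * k) / 2 / (2 * k)! *
        Polynomial.aeval x (Polynomial.bernoulli (2 * k))) := by
  have h := (hasSum_nat_add_iff' 1).mpr (hasSum_one_div_nat_pow_mul_cos hk hx)
  rw [sum_range_one, Nat.cast_zero, zero_pow (by omega : 2 * k ≠ 0), div_zero, zero_mul, sub_zero,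
    Polynomial.eval_map_algebraMap] at h
  have hf : (fun n : ℕ => Real.cos (2 * π * (n + 1) * x) / ((n : ℝ) + 1) ^ (2 * k)) =
      fun n : ℕ => 1 / ((n + 1 : ℕ) : ℝ) ^ (2 * k) * Real.cos (2 * π * (n + 1 : ℕ) * x) := by
    funext n
    push_cast
    ring
  rwa [hf]

theorem Real.cos_div_abs (a m : ℝ) : Real.cos (a / |m|) = Real.cos (a / m) := by
  rcases abs_choice m with h | h <;> simp [h, div_neg]

theorem hasSum_cos_div_pow_of_one_le_abs {k : ℕ} (hk : k ≠ 0) {m : ℝ} (hm : 1 ≤ |m|) :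
    HasSum (fun n : ℕ => Real.cos (2 * π * (n + 1) / m) / ((n : ℝ) + 1) ^ (2 * k))
      ((-1) ^ (k + 1) * (2 * π) ^ (2 * k) / 2 / (2 * k)! *
        Polynomial.aeval |m|⁻¹ (Polynomial.bernoulli (2 * k))) := by
  have hx : |m|⁻¹ ∈ Set.Icc (0 : ℝ) 1 := ⟨inv_nonneg.2 (abs_nonneg m), inv_le_one_of_one_le₀ hm⟩
  simpa only [← div_eq_mul_inv, Real.cos_div_abs] using hasSum_cos_succ_div_pow hk hx

theorem cos_fourier_series_even (k : ℕ) (hk : 1 ≤ k) (m : ℝ) (hm : 1 ≤ |m|) :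
    ((∑' j : ℕ, Real.cos (2 * π * (j + 1) / m) / ((j : ℝ) + 1) ^ (2 * k) : ℝ) : ℂ) =
      (∑ j ∈ Finset.range (k + 1),
        ((-1 : ℂ) ^ (k - j) / (Nat.factorial (2 * k - 2 * j) : ℂ))
          * ((2 * π / m : ℝ) : ℂ) ^ (2 * k - 2 * j) * riemannZeta (2 * j))
      + ((-1 : ℂ) ^ k * (|m| : ℝ) / (4 * (Nat.factorial (2 * k - 1) : ℂ)))
          * ((2 * π / m : ℝ) : ℂ) ^ (2 * k) := by
  have heven : ∀ n, Even n → ((2 * π / m : ℝ) : ℂ) ^ n = (2 * π * ((|m|⁻¹ : ℝ) : ℂ)) ^ n := by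
    intro n hn
    have : (2 * π / m) ^ n = (2 * π * |m|⁻¹) ^ n := by
      rw [← hn.pow_abs, abs_div, abs_of_pos two_pi_pos, div_eq_mul_inv]
    exact_mod_cast this
  have hcast : ((Polynomial.aeval |m|⁻¹ (Polynomial.bernoulli (2 * k)) : ℝ) : ℂ) =
      Polynomial.aeval ((|m|⁻¹ : ℝ) : ℂ) (Polynomial.bernoulli (2 * k)) :=
    (Polynomial.aeval_algebraMap_apply ℂ (|m|⁻¹ : ℝ) _).symm
  have habs : ((|m| : ℝ) : ℂ) = ((|m|⁻¹ : ℝ) : ℂ)⁻¹ := by push_cast; rw [inv_inv]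
  rw [(hasSum_cos_div_pow_of_one_le_abs (by omega) hm).tsum_eq, heven _ (even_two_mul k), habs,
    sum_congr rfl fun j _ => by rw [heven _ ⟨k - j, by omega⟩],
    ← aeval_bernoulli_two_mul_eq_sum_riemannZeta hk, Complex.ofReal_mul, hcast]
  norm_cast
end

section
/- For every integer k ≥ 1 and every real m with |m| ≥ 1, ∑_{j=1}^{∞} sin(2πj/m)/j^{2k+1} = ∑_{j=0}^{k} ((-1)^{k-j}/(2k+1-2j)!)·(2π/m)^{2k+1-2j}·ζ(2j) + ((-1)^k·|m|/(4(2k)!))·(2π/m)^{2k+1}, with ζ(0) = −1/2. -/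
open Real Complex

noncomputable def Rterm (k : ℕ) (m : ℝ) : ℝ :=
  (∑ j ∈ Finset.range (k + 1),
    (-1 : ℝ) ^ (k - j) / (Nat.factorial (2 * k + 1 - 2 * j)) * (2 * π / m) ^ (2 * k + 1 - 2 * j) *
      ((-1 : ℝ) ^ (j + 1) * (2 * π) ^ (2 * j) * ((bernoulli (2 * j) : ℚ) : ℝ) /
        (2 * (Nat.factorial (2 * j)))))
  + (-1 : ℝ) ^ k * |m| / (4 * (Nat.factorial (2 * k))) * (2 * π / m) ^ (2 * k + 1)

private lemma aux_sum_range_two_mul (n : ℕ) (g : ℕ → ℝ) :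
    ∑ i ∈ Finset.range (2 * n), g i = ∑ j ∈ Finset.range n, (g (2 * j) + g (2 * j + 1)) := by
  induction n with
  | zero => simp
  | succ n ih =>
      rw [Finset.sum_range_succ, ← ih, mul_add, mul_one, Finset.sum_range_succ,
        Finset.sum_range_succ]
      ring

private lemma aux_zeta_even (j : ℕ) :
    riemannZeta (2 * j) =
      (((-1 : ℝ) ^ (j + 1) * (2 * π) ^ (2 * j) * ((bernoulli (2 * j) : ℚ) : ℝ) /
        (2 * (Nat.factorial (2 * j)))) : ℝ) := by
  rcases eq_or_ne j 0 with rfl | hj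
  · simp [riemannZeta_zero]
  · rw [riemannZeta_two_mul_nat hj]
    push_cast
    have h2 : ((2 : ℂ)) ^ (2 * j - 1) = 2 ^ (2 * j) / 2 := by
      rw [eq_div_iff (two_ne_zero), ← pow_succ]
      congr 1; omega
    rw [h2, mul_pow]
    ring

private lemma aux_identity (k : ℕ) (hk : 1 ≤ k) (m : ℝ) (hm0 : 0 < m) :
    (-1 : ℝ) ^ (k + 1) * (2 * π) ^ (2 * k + 1) / 2 / (Nat.factorial (2 * k + 1)) *
      (∑ i ∈ Finset.range (2 * (k + 1)),
        ((bernoulli i : ℚ) : ℝ) * ((2 * k + 1).choose i) * (1 / m) ^ (2 * k + 1 - i))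
    = Rterm k m := by
  have hmne : m ≠ 0 := ne_of_gt hm0
  rw [aux_sum_range_two_mul, Finset.sum_add_distrib, mul_add, Finset.mul_sum, Rterm]
  have hodd : ∀ j ∈ Finset.range (k + 1), j ≠ 0 →
      ((bernoulli (2 * j + 1) : ℚ) : ℝ) * ((2 * k + 1).choose (2 * j + 1))
        * (1 / m) ^ (2 * k + 1 - (2 * j + 1)) = 0 := by
    intro j _ hj
    have : bernoulli (2 * j + 1) = 0 := by
      rw [bernoulli_eq_bernoulli'_of_ne_one (by omega)]
      exact bernoulli'_eq_zero_of_odd ⟨j, by ring⟩ (by omega)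
    rw [this]
    simp
  rw [Finset.sum_eq_single_of_mem 0 (Finset.mem_range.mpr (by omega)) hodd]
  congr 1
  · refine Finset.sum_congr rfl fun j hj => ?_
    have hjk : j ≤ k := by have := Finset.mem_range.mp hj; omega
    have e3 : (((2 * k + 1).choose (2 * j) : ℝ)) * (Nat.factorial (2 * j)) *
        (Nat.factorial (2 * k + 1 - 2 * j)) = Nat.factorial (2 * k + 1) := by
      exact_mod_cast congrArg Nat.cast
        (Nat.choose_mul_factorial_mul_factorial (by omega : 2 * j ≤ 2 * k + 1))
    have e1 : (-1 : ℝ) ^ (k - j) * (-1) ^ (j + 1) = (-1) ^ (k + 1) := by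
      rw [← pow_add]; congr 1; omega
    have e2 : ((2 * π : ℝ)) ^ (2 * k + 1 - 2 * j) * (2 * π) ^ (2 * j) = (2 * π) ^ (2 * k + 1) := by
      rw [← pow_add]; congr 1; omega
    have h2 : (2 * π / m) ^ (2 * k + 1 - 2 * j)
        = (2 * π) ^ (2 * k + 1 - 2 * j) * (1 / m) ^ (2 * k + 1 - 2 * j) := by
      rw [div_eq_mul_one_div, mul_pow]
    rw [h2]
    have f1 : (Nat.factorial (2 * j) : ℝ) ≠ 0 := by positivity
    have f2 : (Nat.factorial (2 * k + 1 - 2 * j) : ℝ) ≠ 0 := by positivity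
    have f3 : (Nat.factorial (2 * k + 1) : ℝ) ≠ 0 := by positivity
    have hC1 : (((2 * k + 1).choose (2 * j) : ℝ)) ≠ 0 := by
      have := Nat.choose_pos (show 2 * j ≤ 2 * k + 1 by omega)
      positivity
    rw [← e3, ← e1, ← e2]
    field_simp
  · simp only [Nat.mul_zero, Nat.zero_add, mul_zero, zero_add]
    have hfac : ((Nat.factorial (2 * k + 1) : ℝ)) = (2 * k + 1) * Nat.factorial (2 * k) := by
      exact_mod_cast congrArg Nat.cast (Nat.factorial_succ (2 * k))
    have hxm : (1 / m) * m = 1 := one_div_mul_cancel hmne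
    rw [abs_of_pos hm0, bernoulli_one]
    have hch : ((2 * k + 1).choose 1 : ℝ) = 2 * k + 1 := by
      rw [Nat.choose_one_right]; push_cast; ring
    rw [hch, hfac]
    have hfne : (Nat.factorial (2 * k) : ℝ) ≠ 0 := by positivity
    have h1 : (1 / m : ℝ) ^ (2 * k + 1 - 1) = (1 / m) ^ (2 * k) := by norm_num
    rw [h1]
    have h2 : (2 * π / m) ^ (2 * k + 1) = (2 * π) ^ (2 * k + 1) * (1 / m) ^ (2 * k + 1) := by
      rw [div_eq_mul_one_div, mul_pow]
    rw [h2, pow_succ (1 / m) (2 * k)]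
    push_cast
    field_simp
    ring

private lemma aux_pos_case (k : ℕ) (hk : 1 ≤ k) (m : ℝ) (hm : 1 ≤ m) :
    (∑' j : ℕ, Real.sin (2 * π * (j + 1) / m) / ((j : ℝ) + 1) ^ (2 * k + 1)) = Rterm k m := by
  have hm0 : (0 : ℝ) < m := lt_of_lt_of_le one_pos hm
  set x : ℝ := 1 / m with hxdef
  have hx : x ∈ Set.Icc (0 : ℝ) 1 := ⟨by positivity, by rw [hxdef, div_le_one hm0]; linarith⟩
  have h := hasSum_one_div_nat_pow_mul_sin (k := k) (by omega) hx
  have h2 := Summable.tsum_eq_zero_add h.summable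
  rw [h.tsum_eq] at h2
  simp only [Nat.cast_zero, Nat.cast_add, Nat.cast_one, zero_pow (by omega : 2 * k + 1 ≠ 0),
    mul_zero, Real.sin_zero, div_zero, zero_mul, zero_add, mul_zero] at h2
  have key : (∑' n : ℕ, Real.sin (2 * π * ((n : ℝ) + 1) / m) / ((n : ℝ) + 1) ^ (2 * k + 1))
      = (-1 : ℝ) ^ (k + 1) * (2 * π) ^ (2 * k + 1) / 2 / (Nat.factorial (2 * k + 1)) *
      (Polynomial.map (algebraMap ℚ ℝ) (Polynomial.bernoulli (2 * k + 1))).eval x := by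
    rw [h2]
    refine tsum_congr fun n => ?_
    rw [hxdef, one_div_mul_eq_div, mul_one_div]
  rw [key, ← aux_identity k hk m hm0]
  congr 1
  rw [show (2 : ℕ) * (k + 1) = 2 * k + 1 + 1 by ring, Polynomial.bernoulli, Polynomial.map_sum,
    Polynomial.eval_finset_sum]
  refine Finset.sum_congr rfl fun i _ => ?_
  rw [Polynomial.map_monomial, Polynomial.eval_monomial, eq_ratCast, hxdef]
  push_cast
  ring

private lemma aux_neg (k : ℕ) (m : ℝ) : Rterm k (-m) = -Rterm k m := by
  rw [Rterm, Rterm, neg_add, ← Finset.sum_neg_distrib]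
  congr 1
  · refine Finset.sum_congr rfl fun j hj => ?_
    have hjk : j ≤ k := by have := Finset.mem_range.mp hj; omega
    have ho : Odd (2 * k + 1 - 2 * j) := ⟨k - j, by omega⟩
    rw [div_neg, ho.neg_pow]
    ring
  · have ho : Odd (2 * k + 1) := ⟨k, by ring⟩
    rw [div_neg, ho.neg_pow, abs_neg]
    ring

theorem sin_fourier_series_odd (k : ℕ) (hk : 1 ≤ k) (m : ℝ) (hm : 1 ≤ |m|) :
    ((∑' j : ℕ, Real.sin (2 * π * (j + 1) / m) / ((j : ℝ) + 1) ^ (2 * k + 1) : ℝ) : ℂ) =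
      (∑ j ∈ Finset.range (k + 1),
        ((-1 : ℂ) ^ (k - j) / (Nat.factorial (2 * k + 1 - 2 * j) : ℂ))
          * ((2 * π / m : ℝ) : ℂ) ^ (2 * k + 1 - 2 * j) * riemannZeta (2 * j))
      + ((-1 : ℂ) ^ k * (|m| : ℝ) / (4 * (Nat.factorial (2 * k) : ℂ)))
          * ((2 * π / m : ℝ) : ℂ) ^ (2 * k + 1) := by
  have hmne : m ≠ 0 := by
    intro h; rw [h] at hm; simp at hm; linarith
  have hRHS : (∑ j ∈ Finset.range (k + 1),
        ((-1 : ℂ) ^ (k - j) / (Nat.factorial (2 * k + 1 - 2 * j) : ℂ))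
          * ((2 * π / m : ℝ) : ℂ) ^ (2 * k + 1 - 2 * j) * riemannZeta (2 * j))
      + ((-1 : ℂ) ^ k * (|m| : ℝ) / (4 * (Nat.factorial (2 * k) : ℂ)))
          * ((2 * π / m : ℝ) : ℂ) ^ (2 * k + 1) = ((Rterm k m : ℝ) : ℂ) := by
    rw [Rterm]
    push_cast
    congr 1
    refine Finset.sum_congr rfl fun j hj => ?_
    rw [aux_zeta_even j]
    push_cast
    ring
  rw [hRHS, Complex.ofReal_inj]
  rcases lt_or_ge 0 m with hpos | hneg
  · exact aux_pos_case k hk m (by rwa [abs_of_pos hpos] at hm)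
  · have hneg' : m < 0 := lt_of_le_of_ne hneg hmne
    have h := aux_pos_case k hk (-m) (by rwa [abs_of_neg hneg'] at hm)
    have hterm : ∀ j : ℕ, Real.sin (2 * π * ((j : ℝ) + 1) / m) / ((j : ℝ) + 1) ^ (2 * k + 1)
        = -(Real.sin (2 * π * ((j : ℝ) + 1) / (-m)) / ((j : ℝ) + 1) ^ (2 * k + 1)) := by
      intro j
      rw [div_neg, Real.sin_neg]
      ring
    rw [tsum_congr hterm, tsum_neg, h, aux_neg]
    ring
end

section
/- For every real b that is not an integer and with 2b not an integer, lim_{n→∞} ( ∑_{j=1}^{n} 1/(j+b) − H(n) ) = −1/(2b) + (π/2)·cot(πb) − π·∫₀¹ (sin(2πbu)/sin(2πb) − u)·cot(πu) du. -/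
/-!
The summand splits as `1/(j+b) - 1/j = b/(b²-j²) - b²/(j(b²-j²))`. The first parts sum to
`(π cot πb - 1/b)/2` by the partial fraction expansion of the cotangent. The second part is `π`
times the sine coefficient `2∫₀¹ g(u) sin(2πju) du` of `g(u) = sin(2πbu)/sin(2πb) - u`. Since `g`
is Lipschitz and vanishes at `0` and `1`, `g(u)/sin(πu)` is bounded, and the conjugate Dirichlet
kernel identity `2 sin x ∑_{k=1}^n sin 2kx = cos x - cos (2n+1)x` together with the
Riemann–Lebesgue lemma shows that the partial sums of these coefficients tend to
`∫₀¹ g(u) cot(πu) du`.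
-/

open Real Filter intervalIntegral

open Topology MeasureTheory

theorem tendsto_sum_one_div_sub_add_one_div_add {b : ℝ} (hb : ∀ z : ℤ, b ≠ z) :
    Tendsto (fun n : ℕ => ∑ j ∈ Finset.range n, (1 / (b - (j + 1)) + 1 / (b + (j + 1))))
      atTop (𝓝 (π * cot (π * b) - 1 / b)) := by
  have hmem : (b : ℂ) ∈ Complex.integerComplement := fun ⟨n, hn⟩ =>
    hb n (by exact_mod_cast hn.symm)
  refine Complex.isometry_ofReal.isEmbedding.tendsto_nhds_iff.2 ?_
  convert tendsto_logDeriv_euler_cot_sub hmem using 2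
  · simp [cotTerm]
  · push_cast [Complex.ofReal_cot]
    rfl

theorem one_div_add_sub_one_div {b m : ℝ} (hm : m ≠ 0) (hsub : b - m ≠ 0) (hadd : b + m ≠ 0) :
    1 / (m + b) - 1 / m = (1 / (b - m) + 1 / (b + m)) / 2 - b ^ 2 / (m * (b ^ 2 - m ^ 2)) := by
  have hadd' : m + b ≠ 0 := by rwa [add_comm]
  have hsq : b ^ 2 - m ^ 2 ≠ 0 := by
    rw [sq_sub_sq]
    exact mul_ne_zero hadd hsub
  field_simp
  ring

theorem integral_cos_mul {c : ℝ} (hc : c ≠ 0) : ∫ u in (0:ℝ)..1, cos (c * u) = sin c / c := by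
  rw [intervalIntegral.integral_comp_mul_left (fun u => cos u) hc, integral_cos]
  simp [div_eq_inv_mul]

theorem integral_sin_mul_sin {a c : ℝ} (hsub : a - c ≠ 0) (hadd : a + c ≠ 0) :
    ∫ u in (0:ℝ)..1, sin (a * u) * sin (c * u)
      = (sin (a - c) / (a - c) - sin (a + c) / (a + c)) / 2 := by
  have h : ∀ u, sin (a * u) * sin (c * u) = (cos ((a - c) * u) - cos ((a + c) * u)) / 2 := by
    intro u
    rw [sub_mul, add_mul, cos_sub, cos_add]
    ring
  simp_rw [h]
  rw [intervalIntegral.integral_div, intervalIntegral.integral_sub, integral_cos_mul hsub,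
    integral_cos_mul hadd]
  all_goals exact (by fun_prop : Continuous _).intervalIntegrable _ _

theorem integral_id_mul_sin_mul {c : ℝ} (hc : c ≠ 0) :
    ∫ u in (0:ℝ)..1, u * sin (c * u) = (sin c - c * cos c) / c ^ 2 := by
  have hderiv : ∀ u, HasDerivAt (fun v => (sin (c * v) - c * v * cos (c * v)) / c ^ 2)
      (u * sin (c * u)) u := by
    intro u
    have h1 : HasDerivAt (fun v => c * v) c u := by simpa using (hasDerivAt_id u).const_mul c
    exact (((h1.sin).sub (h1.mul h1.cos)).div_const (c ^ 2)).congr_deriv (by field_simp; ring)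
  rw [integral_eq_sub_of_hasDerivAt (fun u _ => hderiv u)
    ((by fun_prop : Continuous _).intervalIntegrable _ _)]
  simp

theorem two_mul_sin_mul_sum_sin (x : ℝ) (n : ℕ) :
    2 * sin x * ∑ k ∈ Finset.range n, sin (2 * (k + 1) * x) = cos x - cos ((2 * n + 1) * x) := by
  induction n with
  | zero => simp
  | succ n ih =>
    rw [Finset.sum_range_succ, mul_add, ih]
    push_cast
    rw [show (2 * ((n : ℝ) + 1) + 1) * x = 2 * ((n : ℝ) + 1) * x + x by ring,
      show (2 * (n : ℝ) + 1) * x = 2 * ((n : ℝ) + 1) * x - x by ring, cos_add, cos_sub]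
    ring

theorem two_mul_min_le_sin_pi_mul {u : ℝ} (hu : u ∈ Set.Icc (0:ℝ) 1) :
    2 * min u (1 - u) ≤ sin (π * u) := by
  obtain ⟨h0, h1⟩ := hu
  rcases le_total u (1 / 2) with h | h
  · rw [min_eq_left (by linarith)]
    calc 2 * u = 2 / π * (π * u) := by field_simp
      _ ≤ sin (π * u) := mul_le_sin (by positivity) (by nlinarith [pi_pos])
  · rw [min_eq_right (by linarith), ← sin_pi_sub, show π - π * u = π * (1 - u) by ring]
    calc 2 * (1 - u) = 2 / π * (π * (1 - u)) := by field_simp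
      _ ≤ sin (π * (1 - u)) := mul_le_sin (by nlinarith [pi_pos]) (by nlinarith [pi_pos])

theorem MeasureTheory.Integrable.tendsto_integral_mul_cos_atTop {f : ℝ → ℝ} (hf : Integrable f) :
    Tendsto (fun t : ℝ => ∫ v, f v * cos (t * v)) atTop (𝓝 0) := by
  -- the integral is the real part of the Fourier transform of `f` at `t / (2π)`
  have hRL := Real.tendsto_integral_exp_smul_cocompact (fun v => (f v : ℂ))
  have hscale : Tendsto (fun t : ℝ => t / (2 * π)) atTop (cocompact ℝ) :=
    (tendsto_id.atTop_div_const (by positivity)).mono_right atTop_le_cocompact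
  have hre := (Complex.continuous_re.tendsto 0).comp (hRL.comp hscale)
  rw [Complex.zero_re] at hre
  refine hre.congr fun t => ?_
  have hint : Integrable (fun v : ℝ => Real.fourierChar (-(v * (t / (2 * π)))) • (f v : ℂ)) :=
    (Real.fourierIntegral_convergent_iff' (ContinuousLinearMap.mul ℝ ℝ) _).2 hf.ofReal
  have h := integral_re hint
  rw [RCLike.re_to_complex] at h
  rw [Function.comp_apply, Function.comp_apply, ← h]
  congr 1
  ext v
  rw [RCLike.re_to_complex, Circle.smul_def, Real.fourierChar_apply, smul_eq_mul,
    Complex.re_mul_ofReal, Complex.exp_ofReal_mul_I_re, mul_comm, ← cos_neg]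
  congr 2
  field_simp

theorem IntervalIntegrable.tendsto_integral_mul_cos_atTop {f : ℝ → ℝ} {a b : ℝ}
    (hf : IntervalIntegrable f volume a b) :
    Tendsto (fun t : ℝ => ∫ u in a..b, f u * cos (t * u)) atTop (𝓝 0) := by
  have hset : ∀ s : Set ℝ, MeasurableSet s → IntegrableOn f s →
      Tendsto (fun t : ℝ => ∫ u in s, f u * cos (t * u)) atTop (𝓝 0) := by
    intro s hs hfs
    refine ((integrable_indicator_iff hs).2 hfs).tendsto_integral_mul_cos_atTop.congr fun t => ?_
    rw [← MeasureTheory.integral_indicator hs]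
    congr 1
    ext u
    by_cases hu : u ∈ s <;> simp [hu]
  have := (hset _ measurableSet_Ioc hf.1).sub (hset _ measurableSet_Ioc hf.2)
  rwa [sub_zero] at this

namespace LipschitzOnWith

variable {g : ℝ → ℝ} {K : NNReal}

theorem abs_le_mul_sin_pi_mul (hg : LipschitzOnWith K g (Set.Icc 0 1)) (h0 : g 0 = 0)
    (h1 : g 1 = 0) {u : ℝ} (hu : u ∈ Set.Icc (0:ℝ) 1) : |g u| ≤ K / 2 * sin (π * u) := by
  have hleft : |g u| ≤ K * u := by
    simpa [h0, Real.dist_eq, abs_of_nonneg hu.1] using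
      hg.dist_le_mul u hu 0 (Set.left_mem_Icc.2 zero_le_one)
  have hright : |g u| ≤ K * (1 - u) := by
    simpa [h1, Real.dist_eq, abs_sub_comm u, abs_of_nonneg (sub_nonneg.2 hu.2)] using
      hg.dist_le_mul u hu 1 (Set.right_mem_Icc.2 zero_le_one)
  calc |g u| ≤ K * min u (1 - u) := by
        rw [mul_min_of_nonneg _ _ K.coe_nonneg]
        exact le_min hleft hright
    _ ≤ K / 2 * sin (π * u) := by nlinarith [two_mul_min_le_sin_pi_mul hu, K.coe_nonneg]

theorem intervalIntegrable_div_sin_pi_mul (hg : LipschitzOnWith K g (Set.Icc 0 1))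
    (h0 : g 0 = 0) (h1 : g 1 = 0) :
    IntervalIntegrable (fun u => g u / sin (π * u)) volume 0 1 := by
  have hsin : ∀ u ∈ Set.Ioo (0:ℝ) 1, 0 < sin (π * u) := fun u hu =>
    sin_pos_of_pos_of_lt_pi (by nlinarith [pi_pos, hu.1]) (by nlinarith [pi_pos, hu.2])
  rw [intervalIntegrable_iff_integrableOn_Ioo_of_le zero_le_one]
  refine IntegrableOn.of_bound measure_Ioo_lt_top ?_ (K / 2) ?_
  · refine ContinuousOn.aestronglyMeasurable ?_ measurableSet_Ioo
    exact (hg.continuousOn.mono Set.Ioo_subset_Icc_self).div (by fun_prop)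
      fun u hu => (hsin u hu).ne'
  · refine ae_restrict_of_forall_mem measurableSet_Ioo fun u hu => ?_
    rw [Real.norm_eq_abs, abs_div, abs_of_pos (hsin u hu), div_le_iff₀ (hsin u hu)]
    exact hg.abs_le_mul_sin_pi_mul h0 h1 (Set.Ioo_subset_Icc_self hu)

theorem div_sin_pi_mul_mul_sin_pi_mul (hg : LipschitzOnWith K g (Set.Icc 0 1))
    (h0 : g 0 = 0) (h1 : g 1 = 0) {u : ℝ} (hu : u ∈ Set.Icc (0:ℝ) 1) :
    g u / sin (π * u) * sin (π * u) = g u := by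
  by_cases hs : sin (π * u) = 0
  · have := hg.abs_le_mul_sin_pi_mul h0 h1 hu
    rw [hs, mul_zero, abs_nonpos_iff] at this
    simp [this]
  · exact div_mul_cancel₀ _ hs

theorem tendsto_sum_two_mul_integral_mul_sin (hg : LipschitzOnWith K g (Set.Icc 0 1))
    (h0 : g 0 = 0) (h1 : g 1 = 0) :
    Tendsto (fun n : ℕ =>
        ∑ k ∈ Finset.range n, 2 * ∫ u in (0:ℝ)..1, g u * sin (2 * π * (k + 1) * u))
      atTop (𝓝 (∫ u in (0:ℝ)..1, g u * cot (π * u))) := by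
  set h := fun u => g u / sin (π * u)
  have hh : IntervalIntegrable h volume 0 1 := hg.intervalIntegrable_div_sin_pi_mul h0 h1
  have hcos : ∀ c : ℝ, IntervalIntegrable (fun u => h u * cos (c * u)) volume 0 1 := fun c =>
    hh.mul_continuousOn (by fun_prop)
  have hcot : ∫ u in (0:ℝ)..1, g u * cot (π * u) = ∫ u in (0:ℝ)..1, h u * cos (π * u) := by
    refine integral_congr fun u _ => ?_
    simp only [h, cot_eq_cos_div_sin]
    ring
  have hsum : ∀ n : ℕ,
      ∑ k ∈ Finset.range n, 2 * ∫ u in (0:ℝ)..1, g u * sin (2 * π * (k + 1) * u)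
        = (∫ u in (0:ℝ)..1, h u * cos (π * u))
          - ∫ u in (0:ℝ)..1, h u * cos ((2 * n + 1) * π * u) := by
    intro n
    have hgsin : ∀ k : ℕ,
        IntervalIntegrable (fun u => g u * sin (2 * π * (k + 1) * u)) volume 0 1 := fun k =>
      (hg.continuousOn.mul (by fun_prop)).intervalIntegrable_of_Icc zero_le_one
    simp_rw [← intervalIntegral.integral_const_mul]
    rw [← intervalIntegral.integral_finsetSum fun k _ => (hgsin k).const_mul 2,
      ← integral_sub (hcos _) (hcos _)]
    refine integral_congr fun u hu => ?_
    rw [Set.uIcc_of_le zero_le_one] at hu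
    rw [← mul_sub, mul_assoc _ π u, ← two_mul_sin_mul_sum_sin (π * u) n, Finset.mul_sum,
      Finset.mul_sum]
    refine Finset.sum_congr rfl fun k _ => ?_
    rw [show 2 * π * ((k : ℝ) + 1) * u = 2 * (k + 1) * (π * u) by ring]
    linear_combination
      (-2 * sin (2 * (k + 1) * (π * u))) * hg.div_sin_pi_mul_mul_sin_pi_mul h0 h1 hu
  have hfreq : Tendsto (fun n : ℕ => (2 * (n : ℝ) + 1) * π) atTop atTop :=
    (tendsto_atTop_add_const_right _ 1
      (tendsto_natCast_atTop_atTop.const_mul_atTop two_pos)).atTop_mul_const pi_pos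
  have hRL := hh.tendsto_integral_mul_cos_atTop.comp hfreq
  rw [hcot, ← sub_zero (∫ u in (0:ℝ)..1, h u * cos (π * u))]
  exact (tendsto_const_nhds.sub hRL).congr fun n => (hsum n).symm

end LipschitzOnWith

theorem two_mul_integral_sin_div_sub_id_mul_sin {b : ℝ} (hs : sin (2 * π * b) ≠ 0) (k : ℕ) :
    2 * ∫ u in (0:ℝ)..1, (sin (2 * π * b * u) / sin (2 * π * b) - u) * sin (2 * π * (k + 1) * u)
      = b ^ 2 / ((k + 1) * (b ^ 2 - (k + 1) ^ 2)) / π := by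
  have hperiod : 2 * π * ((k : ℝ) + 1) = (k + 1 : ℕ) * (2 * π) := by push_cast; ring
  have hsin_sub : sin (2 * π * b - 2 * π * (k + 1)) = sin (2 * π * b) := by
    rw [hperiod, sin_sub_nat_mul_two_pi]
  have hsin_add : sin (2 * π * b + 2 * π * (k + 1)) = sin (2 * π * b) := by
    rw [hperiod, sin_add_nat_mul_two_pi]
  have hsin_c : sin (2 * π * (k + 1)) = 0 := sin_eq_zero_iff.2 ⟨2 * (k + 1), by push_cast; ring⟩
  have hcos_c : cos (2 * π * (k + 1)) = 1 := by rw [hperiod, cos_nat_mul_two_pi]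
  have hsub : b - (k + 1) ≠ 0 := fun h => hs (by
    rw [← hsin_sub, ← mul_sub, h, mul_zero, sin_zero])
  have hadd : b + (k + 1) ≠ 0 := fun h => hs (by
    rw [← hsin_add, ← mul_add, h, mul_zero, sin_zero])
  have hsq : b ^ 2 - ((k : ℝ) + 1) ^ 2 ≠ 0 := by
    rw [sq_sub_sq]
    exact mul_ne_zero hadd hsub
  have hsplit : ∀ u, (sin (2 * π * b * u) / sin (2 * π * b) - u) * sin (2 * π * (k + 1) * u)
      = (sin (2 * π * b))⁻¹ * (sin (2 * π * b * u) * sin (2 * π * (k + 1) * u))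
        - u * sin (2 * π * (k + 1) * u) := fun u => by ring
  simp_rw [hsplit]
  rw [integral_sub ((by fun_prop : Continuous _).intervalIntegrable _ _)
      ((by fun_prop : Continuous _).intervalIntegrable _ _),
    intervalIntegral.integral_const_mul,
    integral_sin_mul_sin (by rw [← mul_sub]; positivity) (by rw [← mul_add]; positivity),
    integral_id_mul_sin_mul (by positivity), hsin_sub, hsin_add, hsin_c, hcos_c]
  field_simp
  ring

theorem hp_sub_harmonic_limit_closed_form (b : ℝ)
    (hb : ∀ z : ℤ, b ≠ (z : ℝ)) (hb2 : ∀ z : ℤ, 2 * b ≠ (z : ℝ)) :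
    Filter.Tendsto
      (fun n : ℕ => (∑ j ∈ Finset.range n, 1 / ((j : ℝ) + 1 + b)) - harmonicR n)
      Filter.atTop
      (nhds (-1 / (2 * b) + (π / 2) * Real.cot (π * b) -
        π * ∫ u in (0:ℝ)..1,
          (Real.sin (2 * π * b * u) / Real.sin (2 * π * b) - u) * Real.cot (π * u))) := by
  have hs : sin (2 * π * b) ≠ 0 := fun h => by
    obtain ⟨n, hn⟩ := sin_eq_zero_iff.1 h
    exact hb2 n (mul_right_cancel₀ pi_ne_zero (by linarith))
  obtain ⟨K, hK⟩ : ∃ K, LipschitzOnWith K (fun u => sin (2 * π * b * u) / sin (2 * π * b) - u)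
      (Set.Icc 0 1) :=
    (by fun_prop : ContDiff ℝ 1 fun u => sin (2 * π * b * u) / sin (2 * π * b) - u).contDiffOn
      |>.exists_lipschitzOnWith one_ne_zero (convex_Icc 0 1) isCompact_Icc
  have hcot := (tendsto_sum_one_div_sub_add_one_div_add hb).div_const 2
  have hsine := (hK.tendsto_sum_two_mul_integral_mul_sin (by simp) (by simp [hs])).const_mul π
  convert hcot.sub hsine using 1
  · ext n
    rw [harmonicR, ← Finset.sum_sub_distrib, Finset.sum_div, Finset.mul_sum,
      ← Finset.sum_sub_distrib]
    refine Finset.sum_congr rfl fun k _ => ?_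
    rw [two_mul_integral_sin_div_sub_id_mul_sin hs k, mul_div_cancel₀ _ pi_ne_zero]
    exact one_div_add_sub_one_div (by positivity) (fun h => hb (k + 1) (by push_cast; linarith))
      (fun h => hb (-(k + 1)) (by push_cast; linarith))
  · congr 1
    ring
end
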